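/- Let G₁, G₂ be proper convex subdomains of ℝⁿ and f : G₁ → G₂ = f(G₁) an L-bilipschitz homeomorphism with respect to the visual angle metric, i.e. v_{G₁}(x,y)/L ≤ v_{G₂}(f(x),f(y)) ≤ L v_{G₁}(x,y) for all x,y ∈ G₁. Then f is quasiconformal with linear dilatation H(x,f) ≤ 4L² at every point x ∈ G₁. -/

import Mathlib

open Real Set Metric Filter Topology

/-- The visual angle metric. -/
noncomputable def visualAngle {n : ℕ} (G : Set (EuclideanSpace ℝ (Fin n)))
    (x y : EuclideanSpace ℝ (Fin n)) : ℝ :=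
  sSup ((fun z => EuclideanGeometry.angle x z y) '' frontier G)

/-- The linear dilatation `H(x,f) = limsup_{r→0⁺} L(x,f,r)/l(x,f,r)`. -/
noncomputable def linDil {n : ℕ} (f : EuclideanSpace ℝ (Fin n) → EuclideanSpace ℝ (Fin n))
    (x : EuclideanSpace ℝ (Fin n)) : ℝ :=
  Filter.limsup (fun r : ℝ =>
      sSup {d | ∃ z, dist z x = r ∧ d = dist (f z) (f x)} /
      sInf {d | ∃ z, dist z x = r ∧ d = dist (f z) (f x)}) (𝓝[>] 0)

/-
Near `x`, the visual angle metric of a proper convex domain `G` is comparable to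
`|x - y| / d`, where `d = d(x, ∂G)`. From above, `v_G(x, y) ≤ arcsin (|x - y| / d)`, because
every boundary point lies at distance at least `d` from `x`, and `arcsin s ≤ (1 + ε) s` for
small `s`. From below, a hyperplane separating `G` from a nearest point of its complement
puts `G` in a half-space whose boundary is within distance `d` of `x`. The ray from `x` tilted
by `π/4` from the normal of that half-space, on the side away from `y`, leaves `G` within
distance `√2 d` at a point `q` with `sin ∠(y, x, q) ≥ 1/√2`, and the law of sines gives
`v_G(x, y) ≥ ∠(x, q, y) ≥ |x - y| / (2 (|x - y| + d))`.
Chaining these bounds for `G₁` at `x` and `G₂` at `f x` through the bilipschitz condition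
shows that `|f z - f x| / |z - x|` lies in `[D₂ / (c D₁), c D₂ / D₁]` for `z` near `x`,
where `c = 2 L (1 + ε)²`. Hence `H(x, f) ≤ c²`, and we let `ε → 0`.
-/
open scoped RealInnerProductSpace EuclideanGeometry

theorem IsPreconnected.inter_frontier_nonempty {α : Type*} [TopologicalSpace α] {s t : Set α}
    (hs : IsPreconnected s) (hin : (s ∩ t).Nonempty) (hout : (s \ t).Nonempty) :
    (s ∩ frontier t).Nonempty := by
  by_contra! h
  have hsub : s ⊆ interior t ∪ (closure t)ᶜ := fun z hz => by
    by_contra hz'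
    simp only [mem_union, mem_compl_iff, not_or, not_not] at hz'
    exact (h.subset ⟨hz, hz'.2, hz'.1⟩ : z ∈ (∅ : Set α))
  rcases hs.subset_or_subset isOpen_interior isClosed_closure.isOpen_compl
      (disjoint_compl_right.mono_right (compl_subset_compl.2 interior_subset_closure)) hsub with
    h' | h'
  · obtain ⟨z, hz, hzt⟩ := hout
    exact hzt (interior_subset (h' hz))
  · obtain ⟨z, hz, hzt⟩ := hin
    exact h' hz (subset_closure hzt)

theorem IsOpen.exists_add_smul_mem_frontier {E : Type*} [AddCommGroup E] [Module ℝ E]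
    [TopologicalSpace E] [ContinuousAdd E] [ContinuousSMul ℝ E] {G : Set E} (hG : IsOpen G)
    {x ω : E} (hx : x ∈ G) {t₀ : ℝ} (ht₀ : 0 ≤ t₀) (hout : x + t₀ • ω ∉ G) :
    ∃ T ∈ Ioc 0 t₀, x + T • ω ∈ frontier G := by
  have hray : IsPreconnected ((fun t : ℝ => x + t • ω) '' Icc 0 t₀) :=
    isPreconnected_Icc.image _ (by fun_prop)
  obtain ⟨_, ⟨T, hT, rfl⟩, hfr⟩ := hray.inter_frontier_nonempty
    ⟨x, ⟨0, ⟨le_rfl, ht₀⟩, by simp⟩, hx⟩ ⟨_, ⟨t₀, ⟨ht₀, le_rfl⟩, rfl⟩, hout⟩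
  refine ⟨T, ⟨lt_of_le_of_ne hT.1 ?_, hT.2⟩, hfr⟩
  rintro rfl
  exact (hG.inter_frontier_eq.subset ⟨by simpa using hx, hfr⟩ : _ ∈ (∅ : Set E))

theorem IsOpen.infDist_compl_pos {α : Type*} [MetricSpace α] {G : Set α} (hG : IsOpen G)
    {x : α} (hx : x ∈ G) (hGc : Gᶜ.Nonempty) : 0 < infDist x Gᶜ :=
  (hG.isClosed_compl.notMem_iff_infDist_pos hGc).1 (not_not.2 hx)

namespace EuclideanGeometry

variable {V P : Type*} [NormedAddCommGroup V] [InnerProductSpace ℝ V] [MetricSpace P]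
  [NormedAddTorsor V P]

theorem angle_le_pi_div_two_of_dist_le {x y z : P} (h : dist x y ≤ dist x z) :
    ∠ x z y ≤ π / 2 := by
  rw [angle, InnerProductGeometry.angle, arccos_le_pi_div_two]
  refine div_nonneg ?_ (by positivity)
  have hcos := norm_sub_sq_real (x -ᵥ z) (y -ᵥ z)
  rw [vsub_sub_vsub_cancel_right, ← dist_eq_norm_vsub, ← dist_eq_norm_vsub,
    ← dist_eq_norm_vsub] at hcos
  nlinarith [dist_nonneg (x := x) (y := y), dist_nonneg (x := y) (y := z)]

theorem angle_le_arcsin_dist_div {x y z : P} (hz : z ≠ x) (h : dist x y ≤ dist x z) :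
    ∠ x z y ≤ arcsin (dist x y / dist x z) := by
  rw [le_arcsin_iff_sin_le' ⟨by linarith [angle_nonneg x z y, pi_pos],
    angle_le_pi_div_two_of_dist_le h⟩, le_div_iff₀ (dist_pos.2 hz.symm)]
  calc sin (∠ x z y) * dist x z = sin (∠ x y z) * dist x y := by
        rw [angle_comm, dist_comm x z, law_sin]
    _ ≤ 1 * dist x y := by gcongr; exact sin_le_one _
    _ = dist x y := one_mul _

theorem dist_div_le_angle {x y q : P} {d : ℝ} (hsin : 1 ≤ √2 * sin (∠ y x q))
    (hq : dist x q ≤ √2 * d) : dist x y / (2 * (dist x y + d)) ≤ ∠ x q y := by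
  have hd : 0 ≤ d := nonneg_of_mul_nonneg_right (dist_nonneg.trans hq) (by positivity)
  have hs : 0 ≤ sin (∠ x q y) := sin_nonneg_of_nonneg_of_le_pi (angle_nonneg ..) (angle_le_pi ..)
  refine le_trans (div_le_of_le_mul₀ (by positivity) hs ?_) (sin_le (angle_nonneg ..))
  have hqy : dist q y ≤ √2 * d + dist x y := by
    rw [dist_comm x q] at hq
    linarith [dist_triangle q x y]
  have h2 : √2 * √2 = 2 := mul_self_sqrt zero_le_two
  have h2le : √2 ≤ 2 := by nlinarith [sqrt_nonneg 2]
  calc dist x y ≤ √2 * sin (∠ y x q) * dist x y := le_mul_of_one_le_left dist_nonneg hsin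
    _ = √2 * (sin (∠ x q y) * dist q y) := by rw [law_sin, dist_comm y x]; ring
    _ ≤ √2 * (sin (∠ x q y) * (√2 * d + dist x y)) := by gcongr
    _ = sin (∠ x q y) * (2 * d + √2 * dist x y) := by linear_combination (sin (∠ x q y) * d) * h2
    _ ≤ sin (∠ x q y) * (2 * (dist x y + d)) := by gcongr; nlinarith [dist_nonneg (x := x) (y := y)]

end EuclideanGeometry

section

variable {E : Type*} [NormedAddCommGroup E] [InnerProductSpace ℝ E]

theorem exists_norm_eq_one_inner_eq_zero [FiniteDimensional ℝ E] (hE : 2 ≤ Module.finrank ℝ E)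
    (e : E) : ∃ w : E, ‖w‖ = 1 ∧ ⟪e, w⟫ = 0 := by
  have hspan : Module.finrank ℝ (ℝ ∙ e) ≤ 1 := by
    simpa using finrank_span_le_card ({e} : Set E)
  have hne : (ℝ ∙ e)ᗮ ≠ ⊥ := by
    intro hbot
    have := (ℝ ∙ e).finrank_add_finrank_orthogonal
    rw [hbot, finrank_bot] at this
    omega
  obtain ⟨w, hw, hw0⟩ := Submodule.exists_mem_ne_zero_of_ne_bot hne
  refine ⟨‖w‖⁻¹ • w, norm_smul_inv_norm hw0, ?_⟩
  rw [inner_smul_right, Submodule.mem_orthogonal_singleton_iff_inner_right.1 hw, mul_zero]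

theorem exists_inner_eq_one_norm_eq_sqrt_two {e w : E} (he : ‖e‖ = 1) (hw : ‖w‖ = 1)
    (hew : ⟪e, w⟫ = 0) (v : E) :
    ∃ ω : E, ⟪ω, e⟫ = 1 ∧ ‖ω‖ = √2 ∧ 2 * ⟪v, ω⟫ ^ 2 ≤ ‖v‖ ^ 2 * ‖ω‖ ^ 2 := by
  -- `ω = e ± w`, the sign chosen so that `⟪v, ω⟫ = ±(|⟪v, e⟫| - |⟪v, w⟫|)`
  obtain ⟨σ, hσ, hσv⟩ : ∃ σ : ℝ, σ ^ 2 = 1 ∧ σ * (⟪v, e⟫ * ⟪v, w⟫) ≤ 0 := by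
    rcases le_total 0 (⟪v, e⟫ * ⟪v, w⟫) with h | h
    · exact ⟨-1, by norm_num, by linarith⟩
    · exact ⟨1, by norm_num, by linarith⟩
  have hee : ⟪e, e⟫ = 1 := by rw [real_inner_self_eq_norm_sq, he, one_pow]
  have hww : ⟪w, w⟫ = 1 := by rw [real_inner_self_eq_norm_sq, hw, one_pow]
  have hnorm : ‖e + σ • w‖ ^ 2 = 2 := by
    rw [← real_inner_self_eq_norm_sq]
    simp only [inner_add_left, inner_add_right, inner_smul_left, inner_smul_right, hee, hww,
      hew, real_inner_comm e w, RCLike.conj_to_real]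
    linear_combination hσ
  refine ⟨e + σ • w, ?_, ?_, ?_⟩
  · simp only [inner_add_left, inner_smul_left, hee, real_inner_comm e w, hew,
      RCLike.conj_to_real]
    ring
  · rw [← hnorm, sqrt_sq (norm_nonneg _)]
  · rw [hnorm, inner_add_right, inner_smul_right]
    have ha := abs_real_inner_le_norm v e
    have hb := abs_real_inner_le_norm v w
    rw [he, mul_one] at ha
    rw [hw, mul_one] at hb
    have hab : σ * (⟪v, e⟫ * ⟪v, w⟫) = -(|⟪v, e⟫| * |⟪v, w⟫|) := by
      have h1 : |σ * (⟪v, e⟫ * ⟪v, w⟫)| = |⟪v, e⟫| * |⟪v, w⟫| := by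
        rw [abs_mul, abs_mul, show |σ| = 1 by nlinarith [sq_abs σ, abs_nonneg σ], one_mul]
      rw [← h1, abs_of_nonpos hσv, neg_neg]
    have hsq : (⟪v, e⟫ + σ * ⟪v, w⟫) ^ 2 = (|⟪v, e⟫| - |⟪v, w⟫|) ^ 2 := by
      linear_combination ⟪v, w⟫ ^ 2 * hσ + 2 * hab - sq_abs ⟪v, e⟫ - sq_abs ⟪v, w⟫
    nlinarith [abs_nonneg ⟪v, e⟫, abs_nonneg ⟪v, w⟫,
      mul_nonneg (sub_nonneg.2 ha) (sub_nonneg.2 hb)]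

theorem one_le_sqrt_two_mul_sin_angle {v ω : E} (h : 2 * ⟪v, ω⟫ ^ 2 ≤ ‖v‖ ^ 2 * ‖ω‖ ^ 2) :
    1 ≤ √2 * sin (InnerProductGeometry.angle v ω) := by
  have hcos : 2 * cos (InnerProductGeometry.angle v ω) ^ 2 ≤ 1 := by
    rw [InnerProductGeometry.cos_angle, div_pow, mul_pow]
    rcases eq_or_ne (‖v‖ ^ 2 * ‖ω‖ ^ 2) 0 with h0 | h0
    · simp [h0]
    · rw [mul_div_assoc', div_le_one (lt_of_le_of_ne (by positivity) h0.symm)]; linarith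
  have hsq : 1 ≤ (√2 * sin (InnerProductGeometry.angle v ω)) ^ 2 := by
    rw [mul_pow, sq_sqrt zero_le_two]
    nlinarith [sin_sq_add_cos_sq (InnerProductGeometry.angle v ω)]
  have hnonneg : 0 ≤ √2 * sin (InnerProductGeometry.angle v ω) :=
    mul_nonneg (sqrt_nonneg 2) (InnerProductGeometry.sin_angle_nonneg v ω)
  nlinarith

theorem Convex.exists_norm_eq_one_inner_sub_neg [CompleteSpace E] {G : Set E}
    (hconv : Convex ℝ G) (hG : IsOpen G) (hne : G.Nonempty) {p : E} (hp : p ∉ G) :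
    ∃ e : E, ‖e‖ = 1 ∧ ∀ w ∈ G, ⟪w - p, e⟫ < 0 := by
  obtain ⟨f, hf⟩ := geometric_hahn_banach_open_point hconv hG hp
  set a := (InnerProductSpace.toDual ℝ E).symm f
  have hfa : ∀ w, ⟪w - p, a⟫ = f w - f p := fun w => by
    rw [real_inner_comm, inner_sub_right, InnerProductSpace.toDual_symm_apply,
      InnerProductSpace.toDual_symm_apply]
  have ha : a ≠ 0 := by
    obtain ⟨w, hw⟩ := hne
    intro h0
    have := hfa w
    rw [h0, inner_zero_right] at this
    linarith [hf w hw]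
  refine ⟨‖a‖⁻¹ • a, norm_smul_inv_norm ha, fun w hw => ?_⟩
  rw [inner_smul_right, hfa]
  exact mul_neg_of_pos_of_neg (by positivity) (sub_neg.2 (hf w hw))

theorem Convex.exists_mem_frontier_one_le_sqrt_two_mul_sin_angle [FiniteDimensional ℝ E]
    (hE : 2 ≤ Module.finrank ℝ E) {G : Set E} (hconv : Convex ℝ G) (hG : IsOpen G) {x p : E}
    (hx : x ∈ G) (hp : p ∉ G) (y : E) :
    ∃ q ∈ frontier G, dist x q ≤ √2 * dist x p ∧ 1 ≤ √2 * sin (∠ y x q) := by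
  obtain ⟨e, he, hsep⟩ := hconv.exists_norm_eq_one_inner_sub_neg hG ⟨x, hx⟩ hp
  obtain ⟨w, hw, hew⟩ := exists_norm_eq_one_inner_eq_zero hE e
  obtain ⟨ω, hωe, hω, hωv⟩ := exists_inner_eq_one_norm_eq_sqrt_two he hw hew (y - x)
  have hout : x + dist x p • ω ∉ G := fun hmem => by
    have hsupp := hsep _ hmem
    have hpx : ⟪p - x, e⟫ ≤ dist x p := by
      simpa [he, dist_comm x p, dist_eq_norm] using real_inner_le_norm (p - x) e
    rw [show x + dist x p • ω - p = dist x p • ω - (p - x) by abel, inner_sub_left,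
      real_inner_smul_left, hωe, mul_one] at hsupp
    linarith
  obtain ⟨T, ⟨hT0, hTd⟩, hq⟩ := hG.exists_add_smul_mem_frontier hx dist_nonneg hout
  refine ⟨x + T • ω, hq, ?_, ?_⟩
  · rw [dist_self_add_right, norm_smul, hω, Real.norm_of_nonneg hT0.le, mul_comm]
    gcongr
  · rw [EuclideanGeometry.angle, vsub_eq_sub, vsub_eq_sub, add_sub_cancel_left,
      InnerProductGeometry.angle_smul_right_of_pos _ _ hT0]
    exact one_le_sqrt_two_mul_sin_angle hωv

end

theorem angle_le_visualAngle {n : ℕ} {G : Set (EuclideanSpace ℝ (Fin n))}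
    {x y z : EuclideanSpace ℝ (Fin n)} (hz : z ∈ frontier G) : ∠ x z y ≤ visualAngle G x y :=
  le_csSup ⟨π, by rintro _ ⟨w, -, rfl⟩; exact EuclideanGeometry.angle_le_pi _ _ _⟩
    (mem_image_of_mem _ hz)

theorem visualAngle_le_arcsin {n : ℕ} {G : Set (EuclideanSpace ℝ (Fin n))} (hG : IsOpen G)
    {x y : EuclideanSpace ℝ (Fin n)} (hx : x ∈ G) (hGc : Gᶜ.Nonempty)
    (hy : dist x y ≤ infDist x Gᶜ) : visualAngle G x y ≤ arcsin (dist x y / infDist x Gᶜ) := by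
  have hd : 0 < infDist x Gᶜ := hG.infDist_compl_pos hx hGc
  refine csSup_le ((nonempty_frontier_iff.2 ⟨⟨x, hx⟩, nonempty_compl.1 hGc⟩).image _) ?_
  rintro _ ⟨z, hz, rfl⟩
  rw [hG.frontier_eq] at hz
  have hzx : infDist x Gᶜ ≤ dist x z := infDist_le_dist_of_mem hz.2
  calc ∠ x z y ≤ arcsin (dist x y / dist x z) :=
        EuclideanGeometry.angle_le_arcsin_dist_div (by rintro rfl; exact hz.2 hx) (hy.trans hzx)
    _ ≤ arcsin (dist x y / infDist x Gᶜ) := by gcongr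

theorem dist_div_le_visualAngle {n : ℕ} (hn : 2 ≤ n) {G : Set (EuclideanSpace ℝ (Fin n))}
    (hG : IsOpen G) (hconv : Convex ℝ G) {x : EuclideanSpace ℝ (Fin n)} (hx : x ∈ G)
    (hGc : Gᶜ.Nonempty) (y : EuclideanSpace ℝ (Fin n)) :
    dist x y / (2 * (dist x y + infDist x Gᶜ)) ≤ visualAngle G x y := by
  obtain ⟨p, hp, hpd⟩ := hG.isClosed_compl.exists_infDist_eq_dist hGc x
  obtain ⟨q, hq, hxq, hsin⟩ := hconv.exists_mem_frontier_one_le_sqrt_two_mul_sin_angle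
    (by simpa using hn) hG hx hp y
  rw [hpd]
  exact (EuclideanGeometry.dist_div_le_angle hsin hxq).trans (angle_le_visualAngle hq)

theorem eventually_arcsin_le {ε : ℝ} (hε : 0 < ε) :
    ∀ᶠ s in 𝓝[≥] (0 : ℝ), arcsin s ≤ (1 + ε) * s := by
  have hderiv : HasDerivAt arcsin 1 0 := by
    simpa using hasDerivAt_arcsin (x := 0) (by norm_num) (by norm_num)
  have hslope : ∀ᶠ s in 𝓝[≠] (0 : ℝ), slope arcsin 0 s < 1 + ε :=
    (hasDerivAt_iff_tendsto_slope.1 hderiv).eventually (gt_mem_nhds (by linarith))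
  rw [eventually_nhdsWithin_iff] at hslope ⊢
  filter_upwards [hslope] with s hs (hs0 : 0 ≤ s)
  rcases hs0.eq_or_lt with rfl | hpos
  · simp
  · have h := hs hpos.ne'
    rw [slope_def_field, arcsin_zero, sub_zero, sub_zero, div_lt_iff₀ hpos] at h
    exact h.le

theorem eventually_visualAngle_bounds {n : ℕ} (hn : 2 ≤ n) {G : Set (EuclideanSpace ℝ (Fin n))}
    (hG : IsOpen G) (hconv : Convex ℝ G) {x : EuclideanSpace ℝ (Fin n)} (hx : x ∈ G)
    (hGc : Gᶜ.Nonempty) {ε : ℝ} (hε : 0 < ε) :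
    ∀ᶠ y in 𝓝 x, dist x y / infDist x Gᶜ / (2 * (1 + ε)) ≤ visualAngle G x y ∧
      visualAngle G x y ≤ (1 + ε) * (dist x y / infDist x Gᶜ) := by
  set d := infDist x Gᶜ
  have hd : 0 < d := hG.infDist_compl_pos hx hGc
  have hcont : Continuous fun y => dist x y / d := by fun_prop
  have hlim : Tendsto (fun y => dist x y / d) (𝓝 x) (𝓝[≥] 0) :=
    tendsto_nhdsWithin_iff.2
      ⟨by simpa using hcont.tendsto x, .of_forall fun _ => div_nonneg dist_nonneg hd.le⟩
  filter_upwards [hlim.eventually (eventually_arcsin_le hε), hlim.eventually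
    (eventually_nhdsWithin_of_eventually_nhds (eventually_le_nhds (lt_min hε one_pos)))]
    with y harcsin hsmall
  have hyε : dist x y ≤ ε * d := (div_le_iff₀ hd).1 (hsmall.trans (min_le_left _ _))
  have hyd : dist x y ≤ d := by simpa using (div_le_iff₀ hd).1 (hsmall.trans (min_le_right _ _))
  constructor
  · refine le_trans ?_ (dist_div_le_visualAngle hn hG hconv hx hGc y)
    rw [div_div]
    exact div_le_div_of_nonneg_left dist_nonneg (by positivity) (by linarith)
  · exact (visualAngle_le_arcsin hG hx hGc hyd).trans harcsin

theorem linDil_le_div {n : ℕ} (hn : 0 < n)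
    {f : EuclideanSpace ℝ (Fin n) → EuclideanSpace ℝ (Fin n)} {x : EuclideanSpace ℝ (Fin n)}
    {m M : ℝ} (hm : 0 < m)
    (h : ∀ᶠ z in 𝓝 x, m * dist z x ≤ dist (f z) (f x) ∧ dist (f z) (f x) ≤ M * dist z x) :
    linDil f x ≤ M / m := by
  have : Nonempty (Fin n) := ⟨⟨0, hn⟩⟩
  set S : ℝ → Set ℝ := fun r => {d | ∃ z, dist z x = r ∧ d = dist (f z) (f x)}
  have hS_nonneg : ∀ r, ∀ ρ ∈ S r, 0 ≤ ρ := by rintro r _ ⟨z, -, rfl⟩; exact dist_nonneg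
  obtain ⟨δ, hδ, hball⟩ := Metric.eventually_nhds_iff.1 h
  refine limsup_le_of_le (isBoundedUnder_of ⟨0, fun r => div_nonneg (Real.sSup_nonneg
    (hS_nonneg r)) (Real.sInf_nonneg (hS_nonneg r))⟩).isCoboundedUnder_le ?_
  filter_upwards [Ioo_mem_nhdsGT hδ] with r ⟨hr0, hrδ⟩
  have hSr : (S r).Nonempty := by
    obtain ⟨z, hz⟩ := (NormedSpace.sphere_nonempty (x := x)).2 hr0.le
    exact ⟨_, z, hz, rfl⟩
  have hbounds : ∀ ρ ∈ S r, m * r ≤ ρ ∧ ρ ≤ M * r := by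
    rintro _ ⟨z, rfl, rfl⟩
    exact hball hrδ
  have hMr : 0 ≤ M * r := (mul_pos hm hr0).le.trans
    ((hbounds _ hSr.some_mem).1.trans (hbounds _ hSr.some_mem).2)
  calc sSup (S r) / sInf (S r) ≤ (M * r) / (m * r) :=
        div_le_div₀ hMr
          (csSup_le hSr fun ρ hρ => (hbounds ρ hρ).2) (by positivity)
          (le_csInf hSr fun ρ hρ => (hbounds ρ hρ).1)
    _ = M / m := mul_div_mul_right _ _ hr0.ne'

theorem exists_eventually_dist_bounds_of_visualAngle_bilipschitz {n : ℕ} (hn : 2 ≤ n)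
    {G₁ G₂ : Set (EuclideanSpace ℝ (Fin n))} (hopen₁ : IsOpen G₁) (hconv₁ : Convex ℝ G₁)
    (hG₁c : G₁ᶜ.Nonempty) (hopen₂ : IsOpen G₂) (hconv₂ : Convex ℝ G₂) (hG₂c : G₂ᶜ.Nonempty)
    {f : EuclideanSpace ℝ (Fin n) → EuclideanSpace ℝ (Fin n)} {x : EuclideanSpace ℝ (Fin n)}
    (hx : x ∈ G₁) (hfx : f x ∈ G₂) (hcont : ContinuousAt f x) {L : ℝ} (hL : 0 < L)
    (hlip : ∀ z ∈ G₁, visualAngle G₁ x z / L ≤ visualAngle G₂ (f x) (f z) ∧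
      visualAngle G₂ (f x) (f z) ≤ L * visualAngle G₁ x z)
    {ε : ℝ} (hε : 0 < ε) :
    ∃ m M : ℝ, 0 < m ∧ M / m = (2 * L * (1 + ε) ^ 2) ^ 2 ∧
      ∀ᶠ z in 𝓝 x, m * dist z x ≤ dist (f z) (f x) ∧ dist (f z) (f x) ≤ M * dist z x := by
  set D₁ := infDist x G₁ᶜ
  set D₂ := infDist (f x) G₂ᶜ
  have hD₁ : 0 < D₁ := hopen₁.infDist_compl_pos hx hG₁c
  have hD₂ : 0 < D₂ := hopen₂.infDist_compl_pos hfx hG₂c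
  set c := 2 * L * (1 + ε) ^ 2
  have hc : 0 < c := by positivity
  refine ⟨D₂ / (c * D₁), c * D₂ / D₁, by positivity, by field_simp, ?_⟩
  filter_upwards [eventually_visualAngle_bounds hn hopen₁ hconv₁ hx hG₁c hε,
    hcont.eventually (eventually_visualAngle_bounds hn hopen₂ hconv₂ hfx hG₂c hε),
    hopen₁.mem_nhds hx] with z h₁ h₂ hz
  obtain ⟨hlo, hhi⟩ := hlip z hz
  rw [dist_comm z, dist_comm (f z)]
  have hup : dist (f x) (f z) / D₂ ≤ c * (dist x z / D₁) := by
    have := h₂.1.trans (hhi.trans (mul_le_mul_of_nonneg_left h₁.2 hL.le))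
    rw [div_le_iff₀ (by positivity)] at this
    linarith
  have hdown : dist x z / D₁ ≤ c * (dist (f x) (f z) / D₂) := by
    have := h₁.1.trans ((div_le_iff₀' hL).1 hlo |>.trans (mul_le_mul_of_nonneg_left h₂.2 hL.le))
    rw [div_le_iff₀ (by positivity)] at this
    linarith
  constructor
  · calc D₂ / (c * D₁) * dist x z = D₂ / c * (dist x z / D₁) := by field_simp
      _ ≤ D₂ / c * (c * (dist (f x) (f z) / D₂)) := by gcongr
      _ = dist (f x) (f z) := by field_simp
  · calc dist (f x) (f z) = D₂ * (dist (f x) (f z) / D₂) := by field_simp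
      _ ≤ D₂ * (c * (dist x z / D₁)) := by gcongr
      _ = c * D₂ / D₁ * dist x z := by ring

theorem linDil_le_of_visualAngle_bilipschitz_general {n : ℕ} (hn : 2 ≤ n)
    (G₁ G₂ : Set (EuclideanSpace ℝ (Fin n)))
    (hopen₁ : IsOpen G₁) (hconv₁ : Convex ℝ G₁) (hproper₁ : G₁ ≠ univ)
    (hopen₂ : IsOpen G₂) (hconv₂ : Convex ℝ G₂) (hproper₂ : G₂ ≠ univ)
    (f : EuclideanSpace ℝ (Fin n) → EuclideanSpace ℝ (Fin n))
    (hbij : BijOn f G₁ G₂) (hcont : ContinuousOn f G₁)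
    (L : ℝ) (hL : 1 ≤ L)
    (hlip : ∀ x ∈ G₁, ∀ y ∈ G₁,
      visualAngle G₁ x y / L ≤ visualAngle G₂ (f x) (f y) ∧
      visualAngle G₂ (f x) (f y) ≤ L * visualAngle G₁ x y) :
    ∀ x ∈ G₁, linDil f x ≤ 4 * L ^ 2 := by
  intro x hx
  have hbound : ∀ ε > 0, linDil f x ≤ (2 * L * (1 + ε) ^ 2) ^ 2 := fun ε hε => by
    obtain ⟨m, M, hm, hMm, hdist⟩ := exists_eventually_dist_bounds_of_visualAngle_bilipschitz hn
      hopen₁ hconv₁ (nonempty_compl.2 hproper₁) hopen₂ hconv₂ (nonempty_compl.2 hproper₂) hx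
      (hbij.mapsTo hx) (hcont.continuousAt (hopen₁.mem_nhds hx)) (by linarith) (hlip x hx) hε
    exact hMm ▸ linDil_le_div (by omega) hm hdist
  have hlim : Tendsto (fun ε : ℝ => (2 * L * (1 + ε) ^ 2) ^ 2) (𝓝[>] 0) (𝓝 (4 * L ^ 2)) := by
    refine (Continuous.tendsto' (by fun_prop) 0 _ ?_).mono_left nhdsWithin_le_nhds
    ring
  exact ge_of_tendsto hlim (eventually_nhdsWithin_of_forall hbound)

/-- A bilipschitz map w.r.t. the visual angle metric between proper convex subdomains is
quasiconformal, with linear dilatation at most `4L²` at every point. -/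
theorem linDil_le_of_visualAngle_bilipschitz {n : ℕ} (hn : 2 ≤ n)
    (G₁ G₂ : Set (EuclideanSpace ℝ (Fin n)))
    (hopen₁ : IsOpen G₁) (hconv₁ : Convex ℝ G₁) (hne₁ : G₁.Nonempty) (hproper₁ : G₁ ≠ univ)
    (hopen₂ : IsOpen G₂) (hconv₂ : Convex ℝ G₂) (hne₂ : G₂.Nonempty) (hproper₂ : G₂ ≠ univ)
    (f : EuclideanSpace ℝ (Fin n) → EuclideanSpace ℝ (Fin n))
    (hbij : BijOn f G₁ G₂) (hcont : ContinuousOn f G₁)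
    (hcontinv : ContinuousOn (Function.invFunOn f G₁) G₂)
    (L : ℝ) (hL : 1 ≤ L)
    (hlip : ∀ x ∈ G₁, ∀ y ∈ G₁,
      visualAngle G₁ x y / L ≤ visualAngle G₂ (f x) (f y) ∧
      visualAngle G₂ (f x) (f y) ≤ L * visualAngle G₁ x y) :
    ∀ x ∈ G₁, linDil f x ≤ 4 * L ^ 2 :=
  linDil_le_of_visualAngle_bilipschitz_general hn G₁ G₂ hopen₁ hconv₁ hproper₁ hopen₂ hconv₂
    hproper₂ f hbij hcont L hL hlip
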